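/- arXiv:1704.07144 — 5 statements merged into one kernel-verified Lean document; each statement's English description precedes it below -/
import Mathlib

section
/- Let r ≥ 2 be an integer, let λ > 0 and a > 0 be real numbers, and define f : ℝ → ℝ by f(x) = λ·x^r/r! + a. Set b_c = (1 - 1/r)·((r-1)!/λ)^{1/(r-1)}. Then f has a nonnegative fixed point (some x ≥ 0 with f(x) = x) if and only if a ≤ b_c; moreover, when a ≤ b_c there is a fixed point x with a ≤ x ≤ ((r-1)!/λ)^{1/(r-1)}. -/
open Filter

/-- The critical value `b_c = (1 - 1/r) · ((r-1)!/λ)^(1/(r-1))` for the one-step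
infection recursion `f(x) = λ x^r / r! + a` of bootstrap percolation. -/
noncomputable def bcrit (r : ℕ) (lam : ℝ) : ℝ :=
  (1 - 1 / (r : ℝ)) * (((r - 1).factorial : ℝ) / lam) ^ ((1 : ℝ) / ((r : ℝ) - 1))

/-!
With `c = λ/r!`, the map `x ↦ c x^r + a` is convex on `[0, ∞)`, and `X = ((r-1)!/λ)^(1/(r-1))`
is the point where its slope `r c X^(r-1)` equals `1`. Lying above its tangent line at `X` bounds
`x - c x^r` by its value `X - X/r = b_c` at `X`, so a fixed point forces `a ≤ b_c`.
Conversely, if `a ≤ b_c` then `c x^r + a - x` is `≥ 0` at `0` and `≤ 0` at `X`, and the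
intermediate value theorem gives a fixed point in `[0, X]`, which is `≥ a` automatically.
-/

/-- A rescaling of Bernoulli's inequality. -/
theorem pow_ge_tangent_line {x X : ℝ} (hx : 0 ≤ x) (hX : 0 < X) (r : ℕ) :
    X ^ r + r * X ^ (r - 1) * (x - X) ≤ x ^ r := by
  rcases r.eq_zero_or_pos with rfl | hr
  · simp
  have hbern := one_add_mul_le_pow (a := x / X - 1) (by linarith [div_nonneg hx hX.le]) r
  have hXr : X ^ r = X ^ (r - 1) * X := by rw [← pow_succ, Nat.sub_add_cancel hr]
  calc X ^ r + r * X ^ (r - 1) * (x - X) = (1 + r * (x / X - 1)) * X ^ r := by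
        rw [hXr]; field_simp
    _ ≤ (1 + (x / X - 1)) ^ r * X ^ r := by gcongr
    _ = x ^ r := by rw [add_sub_cancel, ← mul_pow, div_mul_cancel₀ x hX.ne']

theorem mul_pow_eq_div_of_tangency {c X : ℝ} {r : ℕ} (htangent : r * c * X ^ (r - 1) = 1) :
    c * X ^ r = X / r := by
  obtain ⟨n, rfl⟩ : ∃ n, r = n + 1 :=
    Nat.exists_eq_succ_of_ne_zero (by rintro rfl; simp at htangent)
  rw [Nat.add_sub_cancel] at htangent
  rw [eq_div_iff (by positivity), pow_succ]
  linear_combination X * htangent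

theorem sub_mul_pow_le_of_tangency {c x X : ℝ} {r : ℕ} (hc : 0 ≤ c) (hx : 0 ≤ x) (hX : 0 < X)
    (htangent : r * c * X ^ (r - 1) = 1) :
    x - c * x ^ r ≤ X - X / r := by
  have hline := mul_le_mul_of_nonneg_left (pow_ge_tangent_line hx hX r) hc
  have hcross : c * (r * X ^ (r - 1) * (x - X)) = x - X := by
    linear_combination (x - X) * htangent
  rw [mul_add, hcross, mul_pow_eq_div_of_tangency htangent] at hline
  linarith

theorem exists_fixedPoint_mul_pow_add_mem_Icc {c a X : ℝ} (r : ℕ) (hc : 0 ≤ c) (ha : 0 ≤ a)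
    (hX0 : 0 ≤ X) (hX : a + c * X ^ r ≤ X) :
    ∃ x, c * x ^ r + a = x ∧ a ≤ x ∧ x ≤ X := by
  have hcont : ContinuousOn (fun x ↦ c * x ^ r + a - x) (Set.Icc 0 X) := by fun_prop
  have hzero : 0 ≤ c * (0 : ℝ) ^ r := by positivity
  have hsign : (0 : ℝ) ∈ Set.Icc (c * X ^ r + a - X) (c * 0 ^ r + a - 0) :=
    ⟨by linarith, by linarith⟩
  obtain ⟨x, ⟨hx0, hxX⟩, hroot⟩ := intermediate_value_Icc' hX0 hcont hsign
  have hpos : 0 ≤ c * x ^ r := by positivity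
  exact ⟨x, by linarith, by linarith, hxX⟩

theorem rpow_one_div_sub_one_pow_pred {K : ℝ} (hK : 0 ≤ K) {r : ℕ} (hr : 2 ≤ r) :
    (K ^ ((1 : ℝ) / ((r : ℝ) - 1))) ^ (r - 1) = K := by
  have hcast : (r : ℝ) - 1 = ((r - 1 : ℕ) : ℝ) := by rw [Nat.cast_pred (by omega)]
  rw [hcast, one_div, Real.rpow_inv_natCast_pow hK (by omega)]

/-- **Fixed points of the infection recursion.** For `f(x) = λ x^r / r! + a` with
`λ, a > 0`, `f` has a nonnegative fixed point iff `a ≤ b_c = (1 - 1/r)((r-1)!/λ)^(1/(r-1))`;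
moreover when `a ≤ b_c` there is a fixed point `x` with `a ≤ x ≤ ((r-1)!/λ)^(1/(r-1))`. -/
theorem infection_recursion_fixed_point
    (r : ℕ) (hr : 2 ≤ r) (lam a : ℝ) (hlam : 0 < lam) (ha : 0 < a) :
    ((∃ x : ℝ, 0 ≤ x ∧ lam * x ^ r / (r.factorial : ℝ) + a = x) ↔ a ≤ bcrit r lam) ∧
    (a ≤ bcrit r lam →
      ∃ x : ℝ, lam * x ^ r / (r.factorial : ℝ) + a = x ∧ a ≤ x ∧
        x ≤ (((r - 1).factorial : ℝ) / lam) ^ ((1 : ℝ) / ((r : ℝ) - 1))) := by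
  set K : ℝ := ((r - 1).factorial : ℝ) / lam
  set X := K ^ ((1 : ℝ) / ((r : ℝ) - 1))
  set c := lam / (r.factorial : ℝ)
  have hK : 0 < K := by positivity
  have hX : 0 < X := by positivity
  have hc : 0 < c := by positivity
  have htangent : r * c * X ^ (r - 1) = 1 := by
    rw [rpow_one_div_sub_one_pow_pred hK.le hr]
    simp only [c, K, ← Nat.mul_factorial_pred (by omega : r ≠ 0)]
    push_cast
    field_simp
  have hbcrit : bcrit r lam = X - X / r := by
    change (1 - 1 / (r : ℝ)) * X = _
    ring
  simp only [mul_div_right_comm lam, hbcrit]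
  have hexists (hab : a ≤ X - X / r) : ∃ x, c * x ^ r + a = x ∧ a ≤ x ∧ x ≤ X := by
    refine exists_fixedPoint_mul_pow_add_mem_Icc r hc.le ha.le hX.le ?_
    rw [mul_pow_eq_div_of_tangency htangent]
    linarith
  refine ⟨⟨fun ⟨x, hx, hfix⟩ ↦ ?_, fun hab ↦ ?_⟩, hexists⟩
  · have := sub_mul_pow_le_of_tangency hc.le hx hX htangent
    linarith
  · obtain ⟨x, hfix, hax, -⟩ := hexists hab
    exact ⟨x, ha.le.trans hax, hfix⟩
end

section
/- Let r ≥ 2 be an integer, let λ > 0, let ε ∈ (0,1), set b_c = (1 - 1/r)·((r-1)!/λ)^{1/(r-1)}, and suppose 0 < a ≤ (1-ε)·b_c. Define the sequence x_0 = a and x_{t+1} = λ·x_t^r/r! + a for t ≥ 0. Then (x_t) is nondecreasing and converges to a limit a* which is the smallest nonnegative fixed point of f(x) = λ·x^r/r! + a, and a* satisfies a* ≤ ((r-1)!/λ)^{1/(r-1)} = (r/(r-1))·b_c; in particular a* = O(b_c). -/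
open Filter

/-- **Subcritical recursion converges to the smallest nonnegative fixed point.**
If `0 < a ≤ (1-ε) b_c` and `x₀ = a`, `x_{t+1} = λ x_t^r / r! + a`, then `(x_t)` is
nondecreasing and converges to a limit `a*` which is the smallest nonnegative fixed
point of `f(x) = λ x^r / r! + a`, and `a* ≤ ((r-1)!/λ)^(1/(r-1)) = (r/(r-1)) b_c`
(in particular `a* = O(b_c)`). -/
theorem infection_recursion_subcritical_limit
    (r : ℕ) (hr : 2 ≤ r) (lam : ℝ) (hlam : 0 < lam)
    (ε : ℝ) (hε0 : 0 < ε) (hε1 : ε < 1)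
    (a : ℝ) (ha : 0 < a) (hsub : a ≤ (1 - ε) * bcrit r lam)
    (x : ℕ → ℝ) (hx0 : x 0 = a)
    (hxs : ∀ t, x (t + 1) = lam * (x t) ^ r / (r.factorial : ℝ) + a) :
    Monotone x ∧
    ∃ astar : ℝ, Tendsto x atTop (nhds astar) ∧
      0 ≤ astar ∧ lam * astar ^ r / (r.factorial : ℝ) + a = astar ∧
      (∀ y : ℝ, 0 ≤ y → lam * y ^ r / (r.factorial : ℝ) + a = y → astar ≤ y) ∧
      astar ≤ (((r - 1).factorial : ℝ) / lam) ^ ((1 : ℝ) / ((r : ℝ) - 1)) ∧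
      (((r - 1).factorial : ℝ) / lam) ^ ((1 : ℝ) / ((r : ℝ) - 1)) =
        ((r : ℝ) / ((r : ℝ) - 1)) * bcrit r lam := by
  set M : ℝ := (((r - 1).factorial : ℝ) / lam) ^ ((1 : ℝ) / ((r : ℝ) - 1)) with hMdef
  have hr2 : (2:ℝ) ≤ (r:ℝ) := by exact_mod_cast hr
  have hr1 : (1:ℝ) ≤ (r:ℝ) - 1 := by linarith
  have hrne : (r:ℝ) ≠ 0 := by positivity
  have hr1ne : (r:ℝ) - 1 ≠ 0 := by linarith
  have hfacpos : (0:ℝ) < ((r - 1).factorial : ℝ) := by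
    exact_mod_cast (r-1).factorial_pos
  have hbase : (0:ℝ) < ((r - 1).factorial : ℝ) / lam := div_pos hfacpos hlam
  have hM0 : 0 < M := Real.rpow_pos_of_pos hbase _
  -- key: M^(r-1) = (r-1)!/lam
  have hMpow : M ^ (r - 1) = ((r - 1).factorial : ℝ) / lam := by
    rw [hMdef, ← Real.rpow_natCast _ (r-1), ← Real.rpow_mul hbase.le]
    have : ((r - 1 : ℕ) : ℝ) = (r:ℝ) - 1 := by
      push_cast [Nat.cast_sub (by omega : 1 ≤ r)]; ring
    rw [this, one_div, inv_mul_cancel₀ hr1ne, Real.rpow_one]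
  have hrfac : (r.factorial : ℝ) = (r:ℝ) * ((r - 1).factorial : ℝ) := by
    conv_lhs => rw [show r = (r - 1) + 1 from by omega, Nat.factorial_succ]
    push_cast [Nat.cast_sub (by omega : 1 ≤ r)]
    ring
  have hfacr : (0:ℝ) < (r.factorial : ℝ) := by exact_mod_cast r.factorial_pos
  -- a ≤ (1 - 1/r) * M
  have hbc : bcrit r lam = (1 - 1/(r:ℝ)) * M := rfl
  have haM : a ≤ (1 - 1/(r:ℝ)) * M := by
    have hbcnn : 0 ≤ (1 - 1/(r:ℝ)) * M := by
      apply mul_nonneg _ hM0.le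
      have : 1/(r:ℝ) ≤ 1/2 := by
        apply div_le_div_of_nonneg_left one_pos.le (by norm_num) hr2 |>.trans_eq rfl
      linarith
    calc a ≤ (1 - ε) * bcrit r lam := hsub
      _ = (1 - ε) * ((1 - 1/(r:ℝ)) * M) := by rw [hbc]
      _ ≤ 1 * ((1 - 1/(r:ℝ)) * M) := by
          apply mul_le_mul_of_nonneg_right (by linarith) hbcnn
      _ = (1 - 1/(r:ℝ)) * M := one_mul _
  -- f(M) ≤ M
  have hfM : lam * M ^ r / (r.factorial : ℝ) + a ≤ M := by
    have hMr : M ^ r = (((r - 1).factorial : ℝ) / lam) * M := by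
      conv_lhs => rw [show r = (r - 1) + 1 from by omega, pow_succ, hMpow]
    have h1 : lam * M ^ r / (r.factorial : ℝ) = M / (r:ℝ) := by
      rw [hMr, hrfac]
      field_simp
    rw [h1]
    have : M / (r:ℝ) + (1 - 1/(r:ℝ)) * M = M := by field_simp; ring
    linarith
  -- f is monotone on nonneg
  have hfmono : ∀ u v : ℝ, 0 ≤ u → u ≤ v →
      lam * u ^ r / (r.factorial : ℝ) + a ≤ lam * v ^ r / (r.factorial : ℝ) + a := by
    intro u v hu huv
    have hp : u ^ r ≤ v ^ r := pow_le_pow_left₀ hu huv r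
    gcongr
  -- positivity of x
  have hxpos : ∀ t, 0 < x t := by
    intro t
    induction t with
    | zero => rw [hx0]; exact ha
    | succ n ih =>
      rw [hxs n]
      have : 0 ≤ lam * (x n) ^ r / (r.factorial : ℝ) := by positivity
      linarith
  -- monotone
  have hstep : ∀ t, x t ≤ x (t + 1) := by
    intro t
    induction t with
    | zero =>
      rw [hx0, hxs 0, hx0]
      have : 0 ≤ lam * a ^ r / (r.factorial : ℝ) := by positivity
      linarith
    | succ n ih =>
      rw [hxs n, hxs (n+1)]
      exact hfmono _ _ (hxpos n).le ih
  have hmono : Monotone x := monotone_nat_of_le_succ hstep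
  -- bounded by M
  have hbdd : ∀ t, x t ≤ M := by
    intro t
    induction t with
    | zero =>
      rw [hx0]
      have : 1/(r:ℝ) * M ≥ 0 := by positivity
      calc a ≤ (1 - 1/(r:ℝ)) * M := haM
        _ ≤ M := by linarith
    | succ n ih =>
      rw [hxs n]
      calc lam * (x n) ^ r / (r.factorial : ℝ) + a
          ≤ lam * M ^ r / (r.factorial : ℝ) + a := hfmono _ _ (hxpos n).le ih
        _ ≤ M := hfM
  refine ⟨hmono, ?_⟩
  have hbddA : BddAbove (Set.range x) := ⟨M, by rintro _ ⟨t, rfl⟩; exact hbdd t⟩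
  set astar := ⨆ t, x t with hadef
  have htend : Tendsto x atTop (nhds astar) := tendsto_atTop_ciSup hmono hbddA
  refine ⟨astar, htend, ?_, ?_, ?_, ?_, ?_⟩
  · have : x 0 ≤ astar := le_ciSup hbddA 0
    rw [hx0] at this; linarith
  · -- fixed point
    have h1 : Tendsto (fun t => x (t + 1)) atTop (nhds astar) :=
      htend.comp (tendsto_add_atTop_nat 1)
    have h2 : Tendsto (fun t => lam * (x t) ^ r / (r.factorial : ℝ) + a) atTop
        (nhds (lam * astar ^ r / (r.factorial : ℝ) + a)) :=
      ((((htend.pow r).const_mul lam).div_const _).add tendsto_const_nhds)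
    have : (fun t => x (t + 1)) = fun t => lam * (x t) ^ r / (r.factorial : ℝ) + a :=
      funext hxs
    rw [this] at h1
    exact tendsto_nhds_unique h2 h1
  · -- minimality
    intro y hy hfix
    have hxy : ∀ t, x t ≤ y := by
      intro t
      induction t with
      | zero =>
        rw [hx0, ← hfix]
        have : 0 ≤ lam * y ^ r / (r.factorial : ℝ) := by positivity
        linarith
      | succ n ih =>
        rw [hxs n, ← hfix]
        exact hfmono _ _ (hxpos n).le ih
    exact ciSup_le hxy
  · exact ciSup_le hbdd
  · rw [hbc]
    field_simp
end

section
/- Let r ≥ 2 be an integer, let λ > 0, let ε ∈ (0,1), set b_c = (1 - 1/r)·((r-1)!/λ)^{1/(r-1)}, and suppose 0 < a ≤ (1-ε)·b_c. Define x_0 = a and x_{t+1} = λ·x_t^r/r! + a, and let Δ(t) = x_{t+1} - x_t. Then Δ(t) is nonnegative and nonincreasing in t with Δ(t) → 0 as t → ∞, and for every η > 0 there exists τ = τ(r, ε, η), depending only on r, ε and η (and not on λ or a), such that Δ(τ) ≤ η·b_c. -/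
open Filter

open Set Nat

/-!
Rescaling by `M = ((r-1)!/λ)^{1/(r-1)}` (so that `λ M^{r-1} = (r-1)!`) turns the recursion into
`y ↦ y^r / r + α` with `α = a / M ≤ (1-ε)(1-1/r)`, in which `λ` no longer appears.
For `c = 1 - ε(1-1/r)` the interval `[0, c]` is invariant under this map, and there its slope
`y^{r-1}` is at most `c^{r-1} < 1`. So the orbit increases inside `[0, c]` and its increments
contract geometrically with a ratio depending only on `r` and `ε`, starting from
`Δ(0) = α^r / r ≤ 1 - 1/r`, i.e. from `Δ(0) ≤ b_c` before rescaling.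
-/

noncomputable def critScale (r : ℕ) (lam : ℝ) : ℝ :=
  (((r - 1)! : ℝ) / lam) ^ ((1 : ℝ) / ((r : ℝ) - 1))

theorem bcrit_eq_mul_critScale (r : ℕ) (lam : ℝ) :
    bcrit r lam = (1 - 1 / (r : ℝ)) * critScale r lam := rfl

theorem critScale_pos (r : ℕ) {lam : ℝ} (hlam : 0 < lam) : 0 < critScale r lam := by
  unfold critScale; positivity

theorem mul_critScale_pow {r : ℕ} (hr : 2 ≤ r) {lam : ℝ} (hlam : 0 < lam) :
    lam * critScale r lam ^ (r - 1) = (r - 1)! := by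
  have hsub : ((r - 1 : ℕ) : ℝ) = (r : ℝ) - 1 := by
    rw [Nat.cast_sub (by omega), Nat.cast_one]
  have hne : (r : ℝ) - 1 ≠ 0 := by
    rw [← hsub, Nat.cast_ne_zero]; omega
  have hbase : (0 : ℝ) ≤ (r - 1)! / lam := by positivity
  rw [critScale, ← Real.rpow_natCast, ← Real.rpow_mul hbase, hsub, one_div_mul_cancel hne,
    Real.rpow_one]
  field_simp

theorem rescaled_step {r : ℕ} (hr : 2 ≤ r) {lam : ℝ} (hlam : 0 < lam) (x a : ℝ) :
    (lam * x ^ r / r ! + a) / critScale r lam =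
      (x / critScale r lam) ^ r / r + a / critScale r lam := by
  have hpow := mul_critScale_pow hr hlam
  have hfact : (r ! : ℝ) = r * (r - 1)! := by
    rw [← Nat.cast_mul, Nat.mul_factorial_pred (by omega)]
  have hsplit : critScale r lam ^ r = critScale r lam ^ (r - 1) * critScale r lam := by
    rw [← pow_succ, Nat.sub_add_cancel (by omega)]
  rw [hfact, ← hpow, div_pow, hsplit]
  field_simp

noncomputable def contractionRatio (r : ℕ) (ε : ℝ) : ℝ :=
  (1 - ε * (1 - 1 / (r : ℝ))) ^ (r - 1)

theorem contractionRatio_nonneg_and_lt_one {r : ℕ} (hr : 2 ≤ r) {ε : ℝ} (hε0 : 0 < ε)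
    (hε1 : ε ≤ 1) : 0 ≤ contractionRatio r ε ∧ contractionRatio r ε < 1 := by
  have hr' : (2 : ℝ) ≤ r := by exact_mod_cast hr
  have hinv : 0 < 1 - 1 / (r : ℝ) := by rw [sub_pos, div_lt_one (by linarith)]; linarith
  have hinv1 : 1 - 1 / (r : ℝ) ≤ 1 := by simp only [one_div, sub_le_self_iff]; positivity
  have hc0 : 0 ≤ 1 - ε * (1 - 1 / (r : ℝ)) := by nlinarith
  exact ⟨pow_nonneg hc0 _, pow_lt_one₀ hc0 (by nlinarith) (by omega)⟩

theorem pow_sub_pow_le_of_le {y z c : ℝ} (n : ℕ) (hz : 0 ≤ z) (hzy : z ≤ y) (hyc : y ≤ c) :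
    y ^ n - z ^ n ≤ n * c ^ (n - 1) * (y - z) := by
  have hy : 0 ≤ y := hz.trans hzy
  calc y ^ n - z ^ n ≤ |y ^ n - z ^ n| := le_abs_self _
    _ ≤ |y - z| * n * max |y| |z| ^ (n - 1) := abs_pow_sub_pow_le _ _ _
    _ = (y - z) * n * y ^ (n - 1) := by
      rw [abs_of_nonneg (sub_nonneg.2 hzy), abs_of_nonneg hy, abs_of_nonneg hz, max_eq_left hzy]
    _ ≤ (y - z) * n * c ^ (n - 1) := by gcongr
    _ = n * c ^ (n - 1) * (y - z) := by ring

section NormalizedOrbit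

variable {r : ℕ} {α c : ℝ} {y : ℕ → ℝ}

theorem orbit_mem_Icc_and_le_succ (hα : 0 ≤ α) (hαc : α ≤ c) (hc : c ^ r / r + α ≤ c)
    (hy0 : y 0 = α) (hy : ∀ t, y (t + 1) = y t ^ r / r + α) (t : ℕ) :
    y t ∈ Icc 0 c ∧ y t ≤ y (t + 1) := by
  induction t with
  | zero =>
    refine ⟨⟨hy0 ▸ hα, hy0 ▸ hαc⟩, ?_⟩
    rw [hy, hy0]
    have : 0 ≤ α ^ r / r := by positivity
    linarith
  | succ t ih =>
    obtain ⟨⟨hnonneg, hle⟩, hmono⟩ := ih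
    refine ⟨⟨hnonneg.trans hmono, ?_⟩, ?_⟩
    · calc y (t + 1) = y t ^ r / r + α := hy t
        _ ≤ c ^ r / r + α := by gcongr
        _ ≤ c := hc
    · calc y (t + 1) = y t ^ r / r + α := hy t
        _ ≤ y (t + 1) ^ r / r + α := by gcongr
        _ = y (t + 1 + 1) := (hy _).symm

theorem orbit_increment_succ_le (hr : r ≠ 0) (hy : ∀ t, y (t + 1) = y t ^ r / r + α)
    (horbit : ∀ t, y t ∈ Icc 0 c ∧ y t ≤ y (t + 1)) (t : ℕ) :
    y (t + 2) - y (t + 1) ≤ c ^ (r - 1) * (y (t + 1) - y t) := by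
  have hsub := pow_sub_pow_le_of_le r (horbit t).1.1 (horbit t).2 (horbit (t + 1)).1.2
  have hr' : (0 : ℝ) < r := by positivity
  calc y (t + 2) - y (t + 1) = (y (t + 1) ^ r - y t ^ r) / r := by
        rw [hy (t + 1), hy t]; ring
    _ ≤ r * c ^ (r - 1) * (y (t + 1) - y t) / r := by gcongr
    _ = c ^ (r - 1) * (y (t + 1) - y t) := by field_simp

theorem normalized_increments {ε : ℝ} (hr : 2 ≤ r) (hε : 0 ≤ ε) (hα0 : 0 ≤ α)
    (hα : α ≤ (1 - ε) * (1 - 1 / r)) (hy0 : y 0 = α) (hy : ∀ t, y (t + 1) = y t ^ r / r + α) :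
    (∀ t, 0 ≤ y (t + 1) - y t) ∧
    (∀ t, y (t + 2) - y (t + 1) ≤ contractionRatio r ε * (y (t + 1) - y t)) ∧
    y 1 - y 0 ≤ 1 - 1 / r := by
  set c := 1 - ε * (1 - 1 / (r : ℝ))
  have hr' : (2 : ℝ) ≤ r := by exact_mod_cast hr
  have hinv : 1 / (r : ℝ) ≤ 1 / 2 := by gcongr
  have hinv0 : 0 < 1 / (r : ℝ) := by positivity
  have hc1 : c ≤ 1 := by
    have : 0 ≤ ε * (1 - 1 / (r : ℝ)) := mul_nonneg hε (by linarith)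
    linarith
  have hαc : α + 1 / r ≤ c := by
    have : (1 - ε) * (1 - 1 / (r : ℝ)) = c - 1 / r := by ring
    linarith
  have hpow_le_one : ∀ {z : ℝ}, 0 ≤ z → z ≤ c → z ^ r / r ≤ 1 / r := fun hz hzc => by
    gcongr; exact pow_le_one₀ hz (hzc.trans hc1)
  have hfix : c ^ r / r + α ≤ c := by linarith [hpow_le_one (by linarith) le_rfl]
  have horbit := orbit_mem_Icc_and_le_succ hα0 (by linarith) hfix hy0 hy
  refine ⟨fun t => sub_nonneg.2 (horbit t).2,
    orbit_increment_succ_le (by omega) hy horbit, ?_⟩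
  rw [hy 0, hy0]
  linarith [hpow_le_one hα0 (by linarith)]

end NormalizedOrbit

theorem subcritical_increments {r : ℕ} (hr : 2 ≤ r) {ε lam a : ℝ} (hε : 0 ≤ ε) (hlam : 0 < lam)
    (ha : 0 ≤ a) (hab : a ≤ (1 - ε) * bcrit r lam) {x : ℕ → ℝ} (hx0 : x 0 = a)
    (hx : ∀ t, x (t + 1) = lam * x t ^ r / r ! + a) :
    (∀ t, 0 ≤ x (t + 1) - x t) ∧
    (∀ t, x (t + 2) - x (t + 1) ≤ contractionRatio r ε * (x (t + 1) - x t)) ∧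
    x 1 - x 0 ≤ bcrit r lam := by
  set M := critScale r lam
  have hM : 0 < M := critScale_pos r hlam
  have hscale : ∀ t, x (t + 1) - x t = M * (x (t + 1) / M - x t / M) := fun t => by
    field_simp
  have hα : a / M ≤ (1 - ε) * (1 - 1 / r) := by
    rw [div_le_iff₀ hM, mul_assoc, ← bcrit_eq_mul_critScale]; exact hab
  obtain ⟨hnonneg, hratio, hfirst⟩ := normalized_increments (y := fun t => x t / M) hr hε
    (div_nonneg ha hM.le) hα (by rw [hx0]) (fun t => by rw [hx t, rescaled_step hr hlam])
  refine ⟨fun t => ?_, fun t => ?_, ?_⟩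
  · rw [hscale]; exact mul_nonneg hM.le (hnonneg t)
  · rw [hscale, hscale, mul_left_comm]; exact mul_le_mul_of_nonneg_left (hratio t) hM.le
  · rw [hscale, bcrit_eq_mul_critScale, mul_comm]; exact mul_le_mul_of_nonneg_right hfirst hM.le

theorem subcritical_increment_le_pow {r : ℕ} (hr : 2 ≤ r) {ε lam a : ℝ} (hε0 : 0 < ε)
    (hε1 : ε ≤ 1) (hlam : 0 < lam) (ha : 0 ≤ a) (hab : a ≤ (1 - ε) * bcrit r lam) {x : ℕ → ℝ}
    (hx0 : x 0 = a) (hx : ∀ t, x (t + 1) = lam * x t ^ r / r ! + a) (t : ℕ) :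
    x (t + 1) - x t ≤ contractionRatio r ε ^ t * bcrit r lam := by
  obtain ⟨-, hratio, hfirst⟩ := subcritical_increments hr hε0.le hlam ha hab hx0 hx
  have hq := (contractionRatio_nonneg_and_lt_one hr hε0 hε1).1
  calc x (t + 1) - x t ≤ contractionRatio r ε ^ t * (x 1 - x 0) :=
        le_geom (u := fun t => x (t + 1) - x t) hq t fun k _ => hratio k
    _ ≤ contractionRatio r ε ^ t * bcrit r lam := by gcongr

/-- **Increments of the subcritical recursion.** For `0 < a ≤ (1-ε) b_c`, `x₀ = a`,
`x_{t+1} = λ x_t^r / r! + a` and `Δ(t) = x_{t+1} - x_t`: the increments `Δ(t)` are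
nonnegative, nonincreasing, and tend to `0`; moreover for every `η > 0` there is a
`τ = τ(r, ε, η)`, depending only on `r`, `ε` and `η` (not on `λ` or `a`), with
`Δ(τ) ≤ η b_c`. -/
theorem infection_recursion_subcritical_increments
    (r : ℕ) (hr : 2 ≤ r) (ε η : ℝ) (hε0 : 0 < ε) (hε1 : ε < 1) (hη : 0 < η) :
    (∀ lam a : ℝ, 0 < lam → 0 < a → a ≤ (1 - ε) * bcrit r lam →
      ∀ x : ℕ → ℝ, x 0 = a →
        (∀ t, x (t + 1) = lam * (x t) ^ r / (r.factorial : ℝ) + a) →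
        (∀ t, 0 ≤ x (t + 1) - x t) ∧
        Antitone (fun t => x (t + 1) - x t) ∧
        Tendsto (fun t => x (t + 1) - x t) atTop (nhds 0)) ∧
    ∃ τ : ℕ, ∀ lam a : ℝ, 0 < lam → 0 < a → a ≤ (1 - ε) * bcrit r lam →
      ∀ x : ℕ → ℝ, x 0 = a →
        (∀ t, x (t + 1) = lam * (x t) ^ r / (r.factorial : ℝ) + a) →
        x (τ + 1) - x τ ≤ η * bcrit r lam := by
  obtain ⟨hq0, hq1⟩ := contractionRatio_nonneg_and_lt_one hr hε0 hε1.le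
  refine ⟨fun lam a hlam ha hab x hx0 hx => ?_, ?_⟩
  · obtain ⟨hnonneg, hratio, -⟩ := subcritical_increments hr hε0.le hlam ha.le hab hx0 hx
    refine ⟨hnonneg,
      antitone_nat_of_succ_le fun t => (hratio t).trans (mul_le_of_le_one_left (hnonneg t) hq1.le),
      ?_⟩
    have hlim := (tendsto_pow_atTop_nhds_zero_of_lt_one hq0 hq1).mul_const (bcrit r lam)
    rw [zero_mul] at hlim
    exact squeeze_zero hnonneg
      (subcritical_increment_le_pow hr hε0 hε1.le hlam ha.le hab hx0 hx) hlim
  · obtain ⟨τ, hτ⟩ := exists_pow_lt_of_lt_one hη hq1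
    refine ⟨τ, fun lam a hlam ha hab x hx0 hx => ?_⟩
    have hb : 0 ≤ bcrit r lam := (pos_of_mul_pos_right (ha.trans_le hab) (by linarith)).le
    exact (subcritical_increment_le_pow hr hε0 hε1.le hlam ha.le hab hx0 hx τ).trans
      (mul_le_mul_of_nonneg_right hτ.le hb)
end

section
/- Let r ≥ 2 be an integer, let λ > 0, let ε ∈ (0,1), set b_c = (1 - 1/r)·((r-1)!/λ)^{1/(r-1)}, and suppose 0 < a ≤ (1-ε)·b_c. Let a* be the limit of the sequence x_0 = a, x_{t+1} = λ·x_t^r/r! + a (the smallest nonnegative fixed point of f(x) = λ·x^r/r! + a). Then the derivative of f at a* is strictly less than 1; more precisely, there exists a constant c = c(r,ε) > 0, depending only on r and ε, such that λ·(a*)^{r-1}/(r-1)! ≤ 1 - c. -/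
open Filter

lemma quad_pow_bound (x : ℝ) (hx0 : 0 ≤ x) (hx1 : x ≤ 1) (n : ℕ) :
    (1 - x) ^ n ≤ 1 - n * x + (n : ℝ) * ((n : ℝ) - 1) / 2 * x ^ 2 := by
  induction n with
  | zero => simp
  | succ k ih =>
    have h0 : (0:ℝ) ≤ (1-x)^k := pow_nonneg (by linarith) _
    have hk : (0:ℝ) ≤ (k:ℝ) * ((k:ℝ) - 1) := by
      rcases Nat.eq_zero_or_pos k with hk0 | hk1
      · simp [hk0]
      · have : (1:ℝ) ≤ (k:ℝ) := by exact_mod_cast hk1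
        nlinarith
    have key := mul_le_mul_of_nonneg_right ih (by linarith : (0:ℝ) ≤ 1 - x)
    rw [pow_succ]
    push_cast
    nlinarith [mul_nonneg hk (pow_nonneg hx0 3)]

set_option maxHeartbeats 1200000 in
/-- **Subcriticality of the derivative at the smallest fixed point.** If
`0 < a ≤ (1-ε) b_c` and `a*` is the smallest nonnegative fixed point of
`f(x) = λ x^r / r! + a` (the limit of the recursion `x₀ = a`,
`x_{t+1} = λ x_t^r / r! + a`), then `f'(a*) = λ (a*)^(r-1) / (r-1)! < 1`; more
precisely, there is a constant `c = c(r,ε) > 0`, depending only on `r` and `ε`,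
with `λ (a*)^(r-1) / (r-1)! ≤ 1 - c`. -/
theorem infection_recursion_derivative_subcritical
    (r : ℕ) (hr : 2 ≤ r) (ε : ℝ) (hε0 : 0 < ε) (hε1 : ε < 1) :
    (∀ lam a astar : ℝ, 0 < lam → 0 < a → a ≤ (1 - ε) * bcrit r lam →
      0 ≤ astar → lam * astar ^ r / (r.factorial : ℝ) + a = astar →
      (∀ y : ℝ, 0 ≤ y → lam * y ^ r / (r.factorial : ℝ) + a = y → astar ≤ y) →
      lam * astar ^ (r - 1) / ((r - 1).factorial : ℝ) < 1) ∧
    ∃ c : ℝ, 0 < c ∧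
      ∀ lam a astar : ℝ, 0 < lam → 0 < a → a ≤ (1 - ε) * bcrit r lam →
        0 ≤ astar → lam * astar ^ r / (r.factorial : ℝ) + a = astar →
        (∀ y : ℝ, 0 ≤ y → lam * y ^ r / (r.factorial : ℝ) + a = y → astar ≤ y) →
        lam * astar ^ (r - 1) / ((r - 1).factorial : ℝ) ≤ 1 - c := by
  have hrr : (2:ℝ) ≤ (r:ℝ) := by exact_mod_cast hr
  set rr : ℝ := (r : ℝ) with hrr_def
  have hrr0 : 0 < rr := by linarith
  set δ : ℝ := min (1/2) (Real.sqrt (2*ε/rr)) with hδ_def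
  have hδ0 : 0 < δ := lt_min (by norm_num) (Real.sqrt_pos.2 (by positivity))
  have hδh : δ ≤ 1/2 := min_le_left _ _
  have hδ2 : δ^2 ≤ 2*ε/rr := by
    calc δ^2 ≤ (Real.sqrt (2*ε/rr))^2 :=
          pow_le_pow_left₀ hδ0.le (min_le_right _ _) 2
    _ = 2*ε/rr := Real.sq_sqrt (by positivity)
  have main : ∀ lam a astar : ℝ, 0 < lam → 0 < a → a ≤ (1 - ε) * bcrit r lam →
      0 ≤ astar → lam * astar ^ r / (r.factorial : ℝ) + a = astar →
      (∀ y : ℝ, 0 ≤ y → lam * y ^ r / (r.factorial : ℝ) + a = y → astar ≤ y) →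
      lam * astar ^ (r - 1) / ((r - 1).factorial : ℝ) ≤ (1 - δ)^(r-1) := by
    intro lam a astar hlam ha hab hast hfix hmin
    have hfp : (0:ℝ) < ((r-1).factorial : ℝ) := by
      exact_mod_cast Nat.factorial_pos _
    set K : ℝ := ((r-1).factorial : ℝ) / lam with hK_def
    have hK : 0 < K := div_pos hfp hlam
    set m : ℝ := K ^ ((1:ℝ)/(rr-1)) with hm_def
    have hm : 0 < m := Real.rpow_pos_of_pos hK _
    have hcast : ((r-1 : ℕ):ℝ) = rr - 1 := by
      rw [Nat.cast_sub (by omega), Nat.cast_one]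
    have hmr : m ^ (r-1) = K := by
      rw [hm_def, ← Real.rpow_natCast (K ^ ((1:ℝ)/(rr-1))) (r-1),
        ← Real.rpow_mul hK.le, hcast]
      rw [one_div, inv_mul_cancel₀ (by linarith : rr - 1 ≠ 0), Real.rpow_one]
    have hfact : (r.factorial : ℝ) = rr * ((r-1).factorial : ℝ) := by
      rw [hrr_def, ← Nat.cast_mul, Nat.mul_factorial_pred (by omega)]
    have hbc : bcrit r lam = (1 - 1/rr) * m := by
      rw [hm_def, hK_def, hrr_def, bcrit]
    set y0 : ℝ := (1 - δ) * m with hy0_def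
    have hy00 : 0 ≤ y0 := mul_nonneg (by linarith) hm.le
    have hpowr : y0 ^ r = (1-δ)^r * (m^(r-1) * m) := by
      rw [hy0_def, mul_pow, ← pow_succ]
      congr 2
      omega
    have h2 : lam * y0^r / (r.factorial:ℝ) = (1-δ)^r * m / rr := by
      rw [hpowr, hmr, hfact, hK_def]
      field_simp
    have hkey : (1-δ)^r / rr + (1-ε)*(1-1/rr) ≤ 1 - δ := by
      have hq := quad_pow_bound δ hδ0.le (by linarith) r
      rw [← hrr_def] at hq
      have hbb := mul_le_mul_of_nonneg_left hδ2
        (show (0:ℝ) ≤ rr*(rr-1)/2 by nlinarith)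
      have heq : rr*(rr-1)/2*(2*ε/rr) = ε*(rr-1) := by field_simp
      have hkey' : (1-δ)^r + (1-ε)*(rr-1) ≤ (1-δ)*rr := by nlinarith
      rw [div_add' _ _ _ (by linarith : rr ≠ 0), div_le_iff₀ hrr0]
      have h1r : (1-ε)*(1-1/rr)*rr = (1-ε)*(rr-1) := by field_simp
      nlinarith
    have hfy0 : lam * y0^r / (r.factorial:ℝ) + a ≤ y0 := by
      have habm : a ≤ (1-ε) * ((1 - 1/rr) * m) := by rw [← hbc]; exact hab
      calc lam * y0^r / (r.factorial:ℝ) + a = (1-δ)^r / rr * m + a := by rw [h2]; ring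
      _ ≤ (1-δ)^r / rr * m + (1-ε)*(1-1/rr) * m := by nlinarith
      _ = ((1-δ)^r / rr + (1-ε)*(1-1/rr)) * m := by ring
      _ ≤ (1-δ) * m := mul_le_mul_of_nonneg_right hkey hm.le
    -- IVT to get a fixed point in [0, y0]
    have hcont : ContinuousOn (fun x : ℝ => lam * x^r / (r.factorial:ℝ) + a - x)
        (Set.Icc 0 y0) :=
      ((((continuous_const.mul (continuous_pow r)).div_const _).add
        continuous_const).sub continuous_id).continuousOn
    have h0mem : (0:ℝ) ∈ Set.Icc (lam * y0^r / (r.factorial:ℝ) + a - y0)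
        (lam * (0:ℝ)^r / (r.factorial:ℝ) + a - 0) := by
      constructor
      · linarith
      · rw [zero_pow (by omega : r ≠ 0)]
        simp
        positivity
    obtain ⟨y, hyIcc, hFy⟩ := intermediate_value_Icc' hy00 hcont h0mem
    have hyfix : lam * y^r / (r.factorial:ℝ) + a = y := by
      have : lam * y^r / (r.factorial:ℝ) + a - y = 0 := hFy
      linarith
    have hay0 : astar ≤ y0 := (hmin y hyIcc.1 hyfix).trans hyIcc.2
    have hpow : astar^(r-1) ≤ y0^(r-1) := pow_le_pow_left₀ hast hay0 _
    have h3 : lam * y0^(r-1) / ((r-1).factorial:ℝ) = (1-δ)^(r-1) := by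
      rw [hy0_def, mul_pow, hmr, hK_def]
      field_simp
    rw [← h3]
    gcongr
  refine ⟨?_, 1 - (1-δ)^(r-1), ?_, ?_⟩
  · intro lam a astar hlam ha hab hast hfix hmin
    have h := main lam a astar hlam ha hab hast hfix hmin
    have : (1-δ)^(r-1) < 1 := pow_lt_one₀ (by linarith) (by linarith) (by omega)
    linarith
  · have : (1-δ)^(r-1) < 1 := pow_lt_one₀ (by linarith) (by linarith) (by omega)
    linarith
  · intro lam a astar hlam ha hab hast hfix hmin
    have h := main lam a astar hlam ha hab hast hfix hmin
    linarith
end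

section
/- Let r ≥ 2 be an integer, let λ > 0, let ε > 0, set b_c = (1 - 1/r)·((r-1)!/λ)^{1/(r-1)}, and suppose a ≥ (1+ε)·b_c. Define x_0 = a, x_{t+1} = λ·x_t^r/r! + a, and Δ(t) = x_{t+1} - x_t. Then there exists t_1 = t_1(r,ε), depending only on r and ε, such that Δ(t+1) > Δ(t) for all t ≥ t_1, i.e. the increments of the recursion are eventually strictly increasing. -/
open Filter

lemma helper_ge (n : ℕ) {x y : ℝ} (hy : 0 ≤ y) (h : y ≤ x) :
    ((n : ℝ) + 1) * y ^ n * (x - y) ≤ x ^ (n + 1) - y ^ (n + 1) := by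
  induction n with
  | zero => simp
  | succ n ih =>
    have hx : 0 ≤ x := hy.trans h
    have hnn : 0 ≤ ((n : ℝ) + 1) * y ^ n * (x - y) :=
      mul_nonneg (mul_nonneg (by positivity) (pow_nonneg hy n)) (sub_nonneg.2 h)
    have h1 : x * (((n : ℝ) + 1) * y ^ n * (x - y)) ≤ x * (x ^ (n + 1) - y ^ (n + 1)) :=
      mul_le_mul_of_nonneg_left ih hx
    have h2 : y * (((n : ℝ) + 1) * y ^ n * (x - y)) ≤ x * (((n : ℝ) + 1) * y ^ n * (x - y)) :=
      mul_le_mul_of_nonneg_right h hnn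
    have key : x ^ (n + 1 + 1) - y ^ (n + 1 + 1) - ((n : ℝ) + 1 + 1) * y ^ (n + 1) * (x - y)
        = (x * (x ^ (n + 1) - y ^ (n + 1)) - x * (((n : ℝ) + 1) * y ^ n * (x - y)))
          + (x * (((n : ℝ) + 1) * y ^ n * (x - y)) - y * (((n : ℝ) + 1) * y ^ n * (x - y))) := by
      ring
    push_cast
    linarith [h1, h2, key]

lemma helper_le (n : ℕ) {x y : ℝ} (hy : 0 ≤ y) (h : y ≤ x) :
    x ^ (n + 1) - y ^ (n + 1) ≤ ((n : ℝ) + 1) * x ^ n * (x - y) := by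
  induction n with
  | zero => simp
  | succ n ih =>
    have hx : 0 ≤ x := hy.trans h
    have h1 : x * (x ^ (n + 1) - y ^ (n + 1)) ≤ x * (((n : ℝ) + 1) * x ^ n * (x - y)) :=
      mul_le_mul_of_nonneg_left ih hx
    have h2 : 0 ≤ (x - y) * (x ^ (n + 1) - y ^ (n + 1)) :=
      mul_nonneg (sub_nonneg.2 h) (sub_nonneg.2 (pow_le_pow_left₀ hy h _))
    have key : ((n : ℝ) + 1 + 1) * x ^ (n + 1) * (x - y) - (x ^ (n + 1 + 1) - y ^ (n + 1 + 1))
        = (x * (((n : ℝ) + 1) * x ^ n * (x - y)) - x * (x ^ (n + 1) - y ^ (n + 1)))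
          + (x - y) * (x ^ (n + 1) - y ^ (n + 1)) := by ring
    push_cast
    linarith [h1, h2, key]

lemma helper_gt (n : ℕ) {x y : ℝ} (hy : 0 < y) (h : y < x) :
    ((n : ℝ) + 2) * y ^ (n + 1) * (x - y) < x ^ (n + 2) - y ^ (n + 2) := by
  have h1 : ((n : ℝ) + 1) * y ^ n * (x - y) ≤ x ^ (n + 1) - y ^ (n + 1) :=
    helper_ge n hy.le h.le
  have hx : 0 < x := hy.trans h
  have hnn : 0 < ((n : ℝ) + 1) * y ^ n * (x - y) :=
    mul_pos (mul_pos (by positivity) (pow_pos hy n)) (sub_pos.2 h)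
  have h2 : x * (((n : ℝ) + 1) * y ^ n * (x - y)) ≤ x * (x ^ (n + 1) - y ^ (n + 1)) :=
    mul_le_mul_of_nonneg_left h1 hx.le
  have h3 : y * (((n : ℝ) + 1) * y ^ n * (x - y)) < x * (((n : ℝ) + 1) * y ^ n * (x - y)) :=
    mul_lt_mul_of_pos_right h hnn
  have key : x ^ (n + 2) - y ^ (n + 2) - ((n : ℝ) + 2) * y ^ (n + 1) * (x - y)
      = (x * (x ^ (n + 1) - y ^ (n + 1)) - x * (((n : ℝ) + 1) * y ^ n * (x - y)))
        + (x * (((n : ℝ) + 1) * y ^ n * (x - y)) - y * (((n : ℝ) + 1) * y ^ n * (x - y))) := by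
    ring
  linarith [h2, h3, key]

set_option maxHeartbeats 1600000 in
/-- **Increments of the supercritical recursion are eventually increasing.** If
`a ≥ (1+ε) b_c` and `x₀ = a`, `x_{t+1} = λ x_t^r / r! + a`, `Δ(t) = x_{t+1} - x_t`,
then there is `t₁ = t₁(r,ε)`, depending only on `r` and `ε` (not on `λ` or `a`),
such that `Δ(t+1) > Δ(t)` for all `t ≥ t₁`. -/
theorem infection_recursion_supercritical_increasing_increments
    (r : ℕ) (hr : 2 ≤ r) (ε : ℝ) (hε : 0 < ε) :
    ∃ t₁ : ℕ, ∀ lam a : ℝ, 0 < lam → (1 + ε) * bcrit r lam ≤ a →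
      ∀ x : ℕ → ℝ, x 0 = a →
        (∀ t, x (t + 1) = lam * (x t) ^ r / (r.factorial : ℝ) + a) →
        ∀ t, t₁ ≤ t → x (t + 1) - x t < x (t + 2) - x (t + 1) := by
  refine ⟨Nat.ceil (1/ε) + 1, ?_⟩
  intro lam a hlam ha x hx0 hrec
  obtain ⟨s, rfl⟩ : ∃ s, r = s + 2 := ⟨r - 2, by omega⟩
  obtain ⟨F, hF⟩ : ∃ F : ℝ, F = (((s+2).factorial : ℕ) : ℝ) := ⟨_, rfl⟩
  rw [← hF] at hrec
  have hFpos : (0:ℝ) < F := by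
    rw [hF]; exact_mod_cast Nat.factorial_pos _
  have hF0 : F ≠ 0 := hFpos.ne'
  have hfac : F = ((s:ℝ)+2) * (((s+1).factorial : ℕ) : ℝ) := by
    rw [hF, show (s+2).factorial = (s+2) * (s+1).factorial from rfl]
    push_cast; ring
  obtain ⟨B, hB⟩ : ∃ B : ℝ, B = (((s+1).factorial : ℕ) : ℝ) / lam := ⟨_, rfl⟩
  have hBpos : 0 < B := hB ▸ div_pos (by exact_mod_cast Nat.factorial_pos _) hlam
  obtain ⟨m, hm⟩ : ∃ m : ℝ, m = B ^ ((1:ℝ)/((s:ℝ)+1)) := ⟨_, rfl⟩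
  have hm0 : 0 < m := hm ▸ Real.rpow_pos_of_pos hBpos _
  have hmr : m ^ (s+1) = B := by
    have e : ((1:ℝ)/((s:ℝ)+1)) * (((s+1:ℕ)) : ℝ) = 1 := by
      push_cast; field_simp
    calc m ^ (s+1) = (B ^ ((1:ℝ)/((s:ℝ)+1))) ^ ((((s+1:ℕ)) : ℝ)) := by
          rw [hm, Real.rpow_natCast]
      _ = B ^ (((1:ℝ)/((s:ℝ)+1)) * (((s+1:ℕ)) : ℝ)) := (Real.rpow_mul hBpos.le _ _).symm
      _ = B := by rw [e, Real.rpow_one]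
  have key : lam * m ^ (s+1) = (((s+1).factorial : ℕ) : ℝ) := by
    rw [hmr, hB]; field_simp
  have hbc : bcrit (s+2) lam = (1 - 1/((s:ℝ)+2)) * m := by
    have e2 : ((s+2:ℕ):ℝ) = (s:ℝ)+2 := by push_cast; ring
    have e3 : (1:ℝ)/(((s+2:ℕ):ℝ)-1) = 1/((s:ℝ)+1) := by rw [e2]; ring
    unfold bcrit
    rw [show (s+2)-1 = s+1 from rfl, e3, e2, hm, hB]
  rw [hbc] at ha
  have h12 : 1/((s:ℝ)+2) ≤ 1/2 := by
    apply one_div_le_one_div_of_le (by norm_num)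
    have : (0:ℝ) ≤ (s:ℝ) := Nat.cast_nonneg s
    linarith
  have h1r : (0:ℝ) < 1 - 1/((s:ℝ)+2) := by linarith
  have hcpos : 0 < ε * ((1 - 1/((s:ℝ)+2)) * m) := mul_pos hε (mul_pos h1r hm0)
  have ham : (1 - 1/((s:ℝ)+2)) * m ≤ a := by nlinarith [mul_pos h1r hm0]
  have ha2 : m/2 ≤ a := by nlinarith [h12, hm0.le]
  have ha0 : 0 < a := lt_of_lt_of_le (half_pos hm0) ha2
  have e1 : lam * m^(s+2)/F = m/((s:ℝ)+2) := by
    rw [show lam * m^(s+2) = (lam * m^(s+1)) * m by ring, key, hfac]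
    have hs1 : ((((s+1).factorial : ℕ)) : ℝ) ≠ 0 := by exact_mod_cast (Nat.factorial_pos _).ne'
    have hs2 : ((s:ℝ)+2) ≠ 0 := by positivity
    field_simp
  have hmin : ε * ((1 - 1/((s:ℝ)+2)) * m) ≤ lam * m^(s+2)/F + a - m := by
    rw [e1]
    have e2 : (1+ε) * ((1 - 1/((s:ℝ)+2)) * m)
        = (1 - 1/((s:ℝ)+2))*m + ε*((1 - 1/((s:ℝ)+2))*m) := by ring
    have e2b : (1 - 1/((s:ℝ)+2))*m = m - m/((s:ℝ)+2) := by
      have hs2 : ((s:ℝ)+2) ≠ 0 := by positivity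
      field_simp
    linarith [ha, e2, e2b]
  have hshift : ∀ y : ℝ, 0 ≤ y → lam * m^(s+2)/F - m ≤ lam * y^(s+2)/F - y := by
    intro y hy
    have h4 : lam * m^(s+2) - F*m ≤ lam * y^(s+2) - F*y := by
      rcases le_total y m with hym | hmy
      · have hp := helper_le (s+1) hy hym
        have hmul := mul_le_mul_of_nonneg_left hp hlam.le
        have e3 : lam * ((((s+1:ℕ):ℝ) + 1) * m^(s+1) * (m-y)) = F*(m-y) := by
          rw [hfac]; push_cast
          linear_combination ((s:ℝ)+2)*(m-y)*key
        push_cast at hmul e3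
        linarith [hmul, e3]
      · have hp := helper_ge (s+1) hm0.le hmy
        have hmul := mul_le_mul_of_nonneg_left hp hlam.le
        have e3 : lam * ((((s+1:ℕ):ℝ) + 1) * m^(s+1) * (y-m)) = F*(y-m) := by
          rw [hfac]; push_cast
          linear_combination ((s:ℝ)+2)*(y-m)*key
        push_cast at hmul e3
        linarith [hmul, e3]
    have h5 : (lam*m^(s+2) - F*m)/F ≤ (lam*y^(s+2) - F*y)/F := by gcongr
    rw [sub_div, sub_div, mul_div_cancel_left₀ _ hF0, mul_div_cancel_left₀ _ hF0] at h5
    exact h5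
  have hstep : ∀ y : ℝ, 0 ≤ y → ε * ((1 - 1/((s:ℝ)+2)) * m) ≤ lam * y^(s+2)/F + a - y :=
    fun y hy => le_trans hmin (by linarith [hshift y hy])
  have hpos : ∀ t : ℕ, a ≤ x t := by
    intro t
    induction t with
    | zero => rw [hx0]
    | succ t ih =>
      rw [hrec t]
      have hxt : 0 ≤ x t := ha0.le.trans ih
      have : 0 ≤ lam * (x t)^(s+2)/F :=
        div_nonneg (mul_nonneg hlam.le (pow_nonneg hxt _)) hFpos.le
      linarith
  have hinc : ∀ t : ℕ, x t + ε * ((1 - 1/((s:ℝ)+2)) * m) ≤ x (t+1) := by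
    intro t
    have hxt : 0 ≤ x t := ha0.le.trans (hpos t)
    have := hstep (x t) hxt
    rw [hrec t]
    linarith
  have hlin : ∀ t : ℕ, a + (t:ℝ) * (ε * ((1 - 1/((s:ℝ)+2)) * m)) ≤ x t := by
    intro t
    induction t with
    | zero => simp [hx0]
    | succ t ih =>
      have := hinc t
      push_cast
      push_cast at ih
      linarith
  have hgt : ∀ t : ℕ, Nat.ceil (1/ε) + 1 ≤ t → m < x t := by
    intro t ht
    have h6 := hlin t
    have h7 : m/2 ≤ (1 - 1/((s:ℝ)+2))*m := by nlinarith [h12, hm0.le]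
    have hc2 : ε*(m/2) ≤ ε * ((1 - 1/((s:ℝ)+2)) * m) := mul_le_mul_of_nonneg_left h7 hε.le
    have htR : (1:ℝ)/ε + 1 ≤ (t:ℝ) := by
      have h8 : ((Nat.ceil (1/ε) + 1 : ℕ) : ℝ) ≤ (t:ℝ) := Nat.cast_le.2 ht
      push_cast at h8
      linarith [Nat.le_ceil (1/ε)]
    have h9 : ((1:ℝ)/ε + 1) * (ε*(m/2)) ≤ (t:ℝ) * (ε * ((1 - 1/((s:ℝ)+2)) * m)) :=
      mul_le_mul htR hc2 (by positivity) (by positivity)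
    have e6 : ((1:ℝ)/ε + 1)*(ε*(m/2)) = m/2 + ε*m/2 := by field_simp
    linarith [h6, ha2, h9, e6, mul_pos hε hm0]
  intro t ht
  have hmt : m < x t := hgt t ht
  have hxt0 : 0 < x t := hm0.trans hmt
  have hd : 0 < x (t+1) - x t := by linarith [hinc t, hcpos]
  have hlt : x t < x (t+1) := by linarith
  have hp := helper_gt s hxt0 hlt
  have hmpow : m^(s+1) < (x t)^(s+1) := by
    exact pow_lt_pow_left₀ hmt hm0.le (by omega)
  have h9 : (((s+1).factorial : ℕ) : ℝ) < lam * (x t)^(s+1) := by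
    rw [← key]; exact mul_lt_mul_of_pos_left hmpow hlam
  have h11 := mul_lt_mul_of_pos_right h9
    (show 0 < ((s:ℝ)+2)*(x (t+1) - x t) from mul_pos (by positivity) hd)
  have h12' := mul_lt_mul_of_pos_left hp hlam
  have e8 : F*(x (t+1) - x t)
      = (((s+1).factorial : ℕ) : ℝ)*(((s:ℝ)+2)*(x (t+1) - x t)) := by rw [hfac]; ring
  have h10 : F*(x (t+1) - x t) < lam*((x (t+1))^(s+2) - (x t)^(s+2)) := by
    linarith [h11, h12', e8]
  have h13 : x (t+1) - x t < lam*((x (t+1))^(s+2) - (x t)^(s+2))/F := by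
    rw [lt_div_iff₀ hFpos]
    linarith [h10]
  have ev : x (t+1) = lam * (x t)^(s+2)/F + a := hrec t
  have ew : x (t+2) = lam * (x (t+1))^(s+2)/F + a := hrec (t+1)
  have esplit : lam*((x (t+1))^(s+2) - (x t)^(s+2))/F
      = lam * (x (t+1))^(s+2)/F - lam * (x t)^(s+2)/F := by ring
  rw [ew]
  linarith [h13, esplit, ev]
end
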